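/- arXiv:2304.10202 — 2 statements merged into one kernel-verified Lean document; each statement's English description precedes it below -/
import Mathlib

section
/- For every weighted digraph D on a finite vertex set V, (mac(UG(D))/2 + r⁺(D))/2 ≤ mac(D) ≤ (mac(UG(D)) + r⁺(D))/2. -/
open scoped BigOperators Classical

noncomputable section

namespace PaperStmt

variable {V : Type*} [Fintype V]

/-- Total weight of a weighted digraph given by `w : V → V → ℝ`. -/
def totalWeight (w : V → V → ℝ) : ℝ := ∑ u, ∑ v, w u v

/-- Weight of the dicut `(X, Xᶜ)`. -/
def cutWeight (w : V → V → ℝ) (X : Finset V) : ℝ := ∑ x ∈ X, ∑ y ∈ Xᶜ, w x y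

/-- Maximum weight of a directed cut. -/
def mac (w : V → V → ℝ) : ℝ :=
  Finset.univ.sup' ⟨∅, Finset.mem_univ ∅⟩ (fun X : Finset V => cutWeight w X)

/-- `r(v) = w⁺(v) - w⁻(v)`. -/
def rv (w : V → V → ℝ) (v : V) : ℝ := (∑ u, w v u) - (∑ u, w u v)

/-- `r⁺(D) = ∑_{v : r(v) > 0} r(v)`. -/
def rPlus (w : V → V → ℝ) : ℝ :=
  ∑ v ∈ Finset.univ.filter (fun v => 0 < rv w v), rv w v

/-- Maximum weight of a cut in the underlying weighted graph `UG(D)`,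
where the edge `{x,y}` has weight `w x y + w y x`. -/
def macUG (w : V → V → ℝ) : ℝ :=
  Finset.univ.sup' ⟨∅, Finset.mem_univ ∅⟩
    (fun X : Finset V => ∑ x ∈ X, ∑ y ∈ Xᶜ, (w x y + w y x))

/-!
For every `X`, `w(X, Xᶜ) + w(Xᶜ, X)` is the weight of the cut `X` in `UG(D)`, while
`w(X, Xᶜ) - w(Xᶜ, X) = ∑_{x ∈ X} r(x) ≤ r⁺(D)` (arcs inside `X` cancel); averaging gives the upper
bound. For the lower bound, a cut of `UG(D)` splits into two dicuts, so `mac(UG(D)) ≤ 2 mac(D)`, and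
the dicut leaving `{v | r(v) > 0}` has weight `r⁺(D) + w(Xᶜ, X) ≥ r⁺(D)`.
-/

variable (w : V → V → ℝ)

lemma cutWeight_compl (X : Finset V) :
    cutWeight w Xᶜ = ∑ x ∈ X, ∑ y ∈ Xᶜ, w y x := by
  rw [cutWeight, compl_compl, Finset.sum_comm]

lemma cutWeight_add_cutWeight_compl (X : Finset V) :
    cutWeight w X + cutWeight w Xᶜ = ∑ x ∈ X, ∑ y ∈ Xᶜ, (w x y + w y x) := by
  rw [cutWeight_compl, cutWeight, ← Finset.sum_add_distrib]
  exact Finset.sum_congr rfl fun x _ => (Finset.sum_add_distrib).symm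

lemma sum_rv_eq_cutWeight_sub_cutWeight_compl (X : Finset V) :
    ∑ x ∈ X, rv w x = cutWeight w X - cutWeight w Xᶜ := by
  have sum_split (f : V → ℝ) : ∑ u, f u = ∑ u ∈ X, f u + ∑ u ∈ Xᶜ, f u :=
    (Finset.sum_add_sum_compl X f).symm
  have inner_cancel : ∑ x ∈ X, ∑ u ∈ X, w x u = ∑ x ∈ X, ∑ u ∈ X, w u x := Finset.sum_comm
  rw [cutWeight_compl]
  simp only [rv, sum_split, Finset.sum_sub_distrib, Finset.sum_add_distrib, cutWeight, inner_cancel]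
  ring

lemma sum_rv_le_rPlus (X : Finset V) : ∑ x ∈ X, rv w x ≤ rPlus w := by
  rw [rPlus, Finset.sum_filter]
  calc ∑ x ∈ X, rv w x ≤ ∑ x ∈ X, if 0 < rv w x then rv w x else 0 :=
        Finset.sum_le_sum fun x _ => by split_ifs <;> linarith
    _ ≤ ∑ x, if 0 < rv w x then rv w x else 0 :=
        Finset.sum_le_sum_of_subset_of_nonneg (Finset.subset_univ X) fun x _ _ => by
          split_ifs <;> linarith

lemma cutWeight_le_mac (X : Finset V) : cutWeight w X ≤ mac w :=
  Finset.le_sup' (cutWeight w) (Finset.mem_univ X)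

lemma cutWeight_add_cutWeight_compl_le_macUG (X : Finset V) :
    cutWeight w X + cutWeight w Xᶜ ≤ macUG w := by
  rw [cutWeight_add_cutWeight_compl]
  exact Finset.le_sup' (fun X : Finset V => ∑ x ∈ X, ∑ y ∈ Xᶜ, (w x y + w y x)) (Finset.mem_univ X)

lemma macUG_le_two_mul_mac : macUG w ≤ 2 * mac w :=
  Finset.sup'_le _ _ fun X _ => by
    rw [← cutWeight_add_cutWeight_compl]
    linarith [cutWeight_le_mac w X, cutWeight_le_mac w Xᶜ]

lemma rPlus_le_mac (hnn : ∀ u v, 0 ≤ w u v) : rPlus w ≤ mac w := by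
  set P := Finset.univ.filter fun v => 0 < rv w v
  have hP : rPlus w = cutWeight w P - cutWeight w Pᶜ := sum_rv_eq_cutWeight_sub_cutWeight_compl w P
  have hPc : 0 ≤ cutWeight w Pᶜ := Finset.sum_nonneg fun x _ => Finset.sum_nonneg fun y _ => hnn x y
  linarith [cutWeight_le_mac w P]

lemma two_mul_mac_le_macUG_add_rPlus : 2 * mac w ≤ macUG w + rPlus w := by
  have h : mac w ≤ (macUG w + rPlus w) / 2 := Finset.sup'_le _ _ fun X _ => by
    linarith [cutWeight_add_cutWeight_compl_le_macUG w X, sum_rv_le_rPlus w X,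
      sum_rv_eq_cutWeight_sub_cutWeight_compl w X]
  linarith

theorem macUG_rPlus_bounds_general {V : Type*} [Fintype V]
    (w : V → V → ℝ) (hnn : ∀ u v, 0 ≤ w u v) :
    (macUG w / 2 + rPlus w) / 2 ≤ mac w ∧ mac w ≤ (macUG w + rPlus w) / 2 :=
  ⟨by linarith [macUG_le_two_mul_mac w, rPlus_le_mac w hnn],
    by linarith [two_mul_mac_le_macUG_add_rPlus w]⟩

theorem macUG_rPlus_bounds {V : Type*} [Fintype V] [Nonempty V]
    (w : V → V → ℝ) (hnn : ∀ u v, 0 ≤ w u v) (hdiag : ∀ v, w v v = 0) :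
    (macUG w / 2 + rPlus w) / 2 ≤ mac w ∧ mac w ≤ (macUG w + rPlus w) / 2 :=
  macUG_rPlus_bounds_general w hnn

end PaperStmt
end
end

section
/- Let D be a weighted digraph on a finite vertex set V and let ν be the maximum order (number of vertices) of a directed path in D. If ν is odd then mac(D) ≥ (1/4 + 1/(4ν))·w(D), and if ν is even then mac(D) ≥ (1/4 + 1/(4(ν−1)))·w(D). -/
open scoped BigOperators Classical

noncomputable section

namespace PaperStmt

variable {V : Type*} [Fintype V]

/-- `IsPathOrder w p` : there is a directed path on `p` distinct vertices,
consecutive pairs joined by arcs of positive weight. -/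
def IsPathOrder (w : V → V → ℝ) (p : ℕ) : Prop :=
  ∃ f : Fin p → V, Function.Injective f ∧
    ∀ (i : ℕ) (h : i + 1 < p), 0 < w (f ⟨i, Nat.lt_of_succ_lt h⟩) (f ⟨i + 1, h⟩)

set_option linter.unusedSectionVars false
set_option linter.unusedVariables false

open Relation


private lemma transGen_union_pair {r : V → V → Prop} {u v : V}
    (h : ∀ x, ¬ TransGen r x x) {a b : V}
    (hab : TransGen (fun x y => r x y ∨ (x = u ∧ y = v)) a b) :
    TransGen r a b ∨ (ReflTransGen r a u ∧ ReflTransGen r v b) := by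
  induction hab with
  | single h1 =>
    rcases h1 with h1 | ⟨rfl, rfl⟩
    · exact Or.inl (TransGen.single h1)
    · exact Or.inr ⟨ReflTransGen.refl, ReflTransGen.refl⟩
  | tail hab hbc ih =>
    rcases hbc with hbc | ⟨rfl, rfl⟩
    · rcases ih with ih | ⟨h1, h2⟩
      · exact Or.inl (ih.tail hbc)
      · exact Or.inr ⟨h1, h2.tail hbc⟩
    · rcases ih with ih | ⟨h1, h2⟩
      · exact Or.inr ⟨ih.to_reflTransGen, ReflTransGen.refl⟩
      · exact Or.inr ⟨h1, ReflTransGen.refl⟩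

lemma exists_coloring (w : V → V → ℝ) (hdiag : ∀ v, w v v = 0) (ν : ℕ)
    (hν : IsGreatest {p : ℕ | IsPathOrder w p} ν) :
    ∃ c : V → ℕ, (∀ v, c v < ν) ∧ ∀ u v, 0 < w u v → c u ≠ c v := by
  classical
  -- the set of acyclic arc-subsets
  set P : Finset (V × V) → Prop :=
    fun A => (∀ p ∈ A, 0 < w p.1 p.2) ∧ ∀ x, ¬ TransGen (fun a b => (a, b) ∈ A) x x with hP
  have hempty : P ∅ := by
    constructor
    · intro p hp; simp at hp
    · intro x hx
      cases hx with
      | single h1 => simp at h1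
      | tail _ h1 => simp at h1
  have hsne : (Finset.univ.filter P).Nonempty :=
    ⟨∅, by simpa using hempty⟩
  obtain ⟨A, hAmem, hmax⟩ := Finset.exists_max_image _ Finset.card hsne
  have hA : P A := (Finset.mem_filter.mp hAmem).2
  set rA : V → V → Prop := fun a b => (a, b) ∈ A with hrA
  have hA1 : ∀ a b, rA a b → 0 < w a b := fun a b hab => hA.1 (a, b) hab
  have hA2 : ∀ x, ¬ TransGen rA x x := hA.2
  -- key dichotomy
  have key : ∀ u v, 0 < w u v → TransGen rA u v ∨ TransGen rA v u := by
    intro u v huv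
    have huvne : u ≠ v := by
      intro h; rw [h, hdiag] at huv; exact lt_irrefl 0 huv
    by_cases hmem : (u, v) ∈ A
    · exact Or.inl (TransGen.single hmem)
    · right
      set B : Finset (V × V) := insert (u, v) A with hB
      have hBcard : A.card < B.card := by
        rw [hB, Finset.card_insert_of_notMem hmem]; omega
      have hPB : ¬ P B := by
        intro hPB
        have := hmax B (Finset.mem_filter.mpr ⟨Finset.mem_univ _, hPB⟩)
        omega
      have hBarcs : ∀ p ∈ B, 0 < w p.1 p.2 := by
        intro p hp
        rcases Finset.mem_insert.mp hp with rfl | hp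
        · exact huv
        · exact hA.1 p hp
      have hcyc : ∃ x, TransGen (fun a b => (a, b) ∈ B) x x := by
        by_contra hc
        push_neg at hc
        exact hPB ⟨hBarcs, hc⟩
      obtain ⟨x, hx⟩ := hcyc
      have hx' : TransGen (fun a b => rA a b ∨ (a = u ∧ b = v)) x x := by
        refine TransGen.mono ?_ _ _ hx
        intro a b hab
        rcases Finset.mem_insert.mp hab with h | h
        · exact Or.inr ⟨congrArg Prod.fst h, congrArg Prod.snd h⟩
        · exact Or.inl h
      rcases transGen_union_pair hA2 hx' with h | ⟨h1, h2⟩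
      · exact absurd h (hA2 x)
      · have hvu : ReflTransGen rA v u := h2.trans h1
        rcases (reflTransGen_iff_eq_or_transGen.mp hvu) with h | h
        · exact absurd h huvne
        · exact h
  -- chain-ending predicate
  set CE : ℕ → V → Prop := fun n v =>
    ∃ f : ℕ → V, f n = v ∧ ∀ i < n, rA (f i) (f (i + 1)) with hCE
  have chainTG : ∀ (f : ℕ → V) (n : ℕ), (∀ i < n, rA (f i) (f (i + 1))) →
      ∀ i j, i < j → j ≤ n → TransGen rA (f i) (f j) := by
    intro f n hf i j hij hjn
    obtain ⟨d, rfl⟩ : ∃ d, j = i + d + 1 := ⟨j - i - 1, by omega⟩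
    clear hij
    induction d with
    | zero => exact TransGen.single (hf i (by omega))
    | succ d ih =>
      exact (ih (by omega)).tail (hf (i + d + 1) (by omega))
  have CE_path : ∀ n v, CE n v → IsPathOrder w (n + 1) := by
    intro n v ⟨f, hfn, hf⟩
    refine ⟨fun k => f k.val, ?_, ?_⟩
    · intro a b hab
      by_contra hne
      have hne' : a.val ≠ b.val := fun h => hne (Fin.ext h)
      simp only at hab
      rcases lt_or_gt_of_ne hne' with h | h
      · have := chainTG f n hf a.val b.val h (by omega)
        rw [hab] at this
        exact hA2 _ this
      · have := chainTG f n hf b.val a.val h (by omega)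
        rw [← hab] at this
        exact hA2 _ this
    · intro i h
      exact hA1 _ _ (hf i (by omega))
  have CE_le : ∀ n v, CE n v → n + 1 ≤ ν := fun n v h => hν.2 (CE_path n v h)
  have CE0 : ∀ v, CE 0 v := fun v => ⟨fun _ => v, rfl, fun i hi => absurd hi (by omega)⟩
  set c : V → ℕ := fun v => Nat.findGreatest (fun n => CE n v) ν with hc
  have spec : ∀ v, CE (c v) v := fun v => Nat.findGreatest_spec (P := fun n => CE n v) (Nat.zero_le ν) (CE0 v)
  have hlt : ∀ v, c v < ν := fun v => by have := CE_le _ _ (spec v); omega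
  have mono : ∀ u v, rA u v → c u < c v := by
    intro u v huv
    obtain ⟨f, hfn, hf⟩ := spec u
    have hCE' : CE (c u + 1) v := by
      refine ⟨fun k => if k ≤ c u then f k else v, by simp, ?_⟩
      intro i hi
      rcases Nat.lt_or_ge i (c u) with h | h
      · simpa [Nat.le_of_lt h, Nat.succ_le_of_lt h] using hf i h
      · have hieq : i = c u := by omega
        have h1 : (if i ≤ c u then f i else v) = u := by
          rw [if_pos (by omega), hieq, hfn]
        have h2 : (if i + 1 ≤ c u then f (i + 1) else v) = v := by
          rw [if_neg (by omega)]
        simp only [h1, h2]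
        exact huv
    have hle : c u + 1 ≤ ν := by have := CE_le _ _ hCE'; omega
    exact Nat.lt_of_succ_le (Nat.le_findGreatest hle hCE')
  have monoT : ∀ u v, TransGen rA u v → c u < c v := by
    intro u v h
    induction h with
    | single h1 => exact mono _ _ h1
    | tail _ h1 ih => exact lt_trans ih (mono _ _ h1)
  refine ⟨c, hlt, ?_⟩
  intro u v huv
  rcases key u v huv with h | h
  · exact Nat.ne_of_lt (monoT _ _ h)
  · exact (Nat.ne_of_lt (monoT _ _ h)).symm



lemma count_lemma {n kk i j : ℕ} (hk1 : 1 ≤ kk) (hi : i < n) (hj : j < n) (hij : i ≠ j) :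
    ((Finset.powersetCard kk (Finset.range n)).filter (fun S => i ∈ S ∧ j ∉ S)).card
      = (n - 2).choose (kk - 1) := by
  classical
  have hbase : (((Finset.range n).erase j).erase i).card = n - 2 := by
    rw [Finset.card_erase_of_mem (Finset.mem_erase.mpr ⟨hij, Finset.mem_range.mpr hi⟩),
      Finset.card_erase_of_mem (Finset.mem_range.mpr hj), Finset.card_range]
    omega
  have h2 : (Finset.powersetCard (kk - 1) (((Finset.range n).erase j).erase i)).card
      = (n - 2).choose (kk - 1) := by
    rw [Finset.card_powersetCard, hbase]
  rw [← h2]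
  apply Finset.card_nbij' (i := fun S => S.erase i) (j := fun T => insert i T)
  · intro S hS
    rw [Finset.mem_coe, Finset.mem_filter, Finset.mem_powersetCard] at hS
    obtain ⟨⟨hsub, hcard⟩, hiS, hjS⟩ := hS
    rw [Finset.mem_coe, Finset.mem_powersetCard]
    constructor
    · intro x hx
      rw [Finset.mem_erase] at hx
      refine Finset.mem_erase.mpr ⟨hx.1, Finset.mem_erase.mpr ⟨?_, hsub hx.2⟩⟩
      rintro rfl; exact hjS hx.2
    · rw [Finset.card_erase_of_mem hiS, hcard]
  · intro T hT
    rw [Finset.mem_coe, Finset.mem_powersetCard] at hT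
    obtain ⟨hsub, hcard⟩ := hT
    have hiT : i ∉ T := fun h => (Finset.mem_erase.mp (hsub h)).1 rfl
    rw [Finset.mem_coe, Finset.mem_filter, Finset.mem_powersetCard]
    refine ⟨⟨?_, ?_⟩, Finset.mem_insert_self i T, ?_⟩
    · intro x hx
      rcases Finset.mem_insert.mp hx with rfl | hx
      · exact Finset.mem_range.mpr hi
      · exact Finset.mem_of_mem_erase (Finset.mem_of_mem_erase (hsub hx))
    · rw [Finset.card_insert_of_notMem hiT, hcard]; omega
    · intro hjmem
      rcases Finset.mem_insert.mp hjmem with h | h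
      · exact hij h.symm
      · exact (Finset.mem_erase.mp (Finset.mem_of_mem_erase (hsub h))).1 rfl
  · intro S hS
    exact Finset.insert_erase (Finset.mem_filter.mp hS).2.1
  · intro T hT
    apply Finset.erase_insert
    rw [Finset.mem_coe, Finset.mem_powersetCard] at hT
    exact fun h => (Finset.mem_erase.mp (hT.1 h)).1 rfl

-- ℕ identities
lemma nat_id_odd (m : ℕ) (hm : 1 ≤ m) :
    (2*m+2) * ((2*m+1).choose (m+1)) = 4 * (2*m+1) * ((2*m-1).choose m) := by
  have e1 : (2*m+1) * ((2*m).choose m) = (2*m+1).choose (m+1) * (m+1) := by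
    simpa [Nat.succ_eq_add_one] using Nat.add_one_mul_choose_eq (2*m) m
  have hsym : (2*m-1).choose (m-1) = (2*m-1).choose m := by
    have h := Nat.choose_symm (show m ≤ 2*m-1 by omega)
    rwa [show 2*m-1-m = m-1 by omega] at h
  have e2 : (2*m).choose m = 2 * ((2*m-1).choose m) := by
    have h1 : ((2*m-1)+1).choose ((m-1)+1) = (2*m-1).choose (m-1) + (2*m-1).choose ((m-1)+1) :=
      Nat.choose_succ_succ _ _
    rw [show (2*m-1)+1 = 2*m by omega, show (m-1)+1 = m by omega] at h1
    rw [h1, hsym]; omega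
  have h3 : (2*m+2) * ((2*m+1).choose (m+1)) = 2*((2*m+1).choose (m+1) * (m+1)) := by ring
  rw [h3, ← e1, e2]; ring

lemma nat_id_even (m : ℕ) (hm : 1 ≤ m) :
    (2*m) * ((2*m).choose m) = 4 * (2*m-1) * ((2*m-2).choose (m-1)) := by
  have e1 : (2*m) * ((2*m-1).choose (m-1)) = (2*m).choose m * m := by
    have h := Nat.add_one_mul_choose_eq (2*m-1) (m-1)
    rwa [show 2*m-1+1 = 2*m by omega, show m-1+1 = m by omega] at h
  have hsym : (2*m-1).choose (m-1) = (2*m-1).choose m := by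
    have h := Nat.choose_symm (show m ≤ 2*m-1 by omega)
    rwa [show 2*m-1-m = m-1 by omega] at h
  have e2 : (2*m-1) * ((2*m-2).choose (m-1)) = (2*m-1).choose (m-1) * m := by
    have h := Nat.add_one_mul_choose_eq (2*m-2) (m-1)
    rwa [show 2*m-2+1 = 2*m-1 by omega, show m-1+1 = m by omega,
      ← hsym] at h
  apply Nat.eq_of_mul_eq_mul_left (show 0 < m by omega)
  calc m * ((2*m) * ((2*m).choose m)) = (2*m) * ((2*m).choose m * m) := by ring
    _ = (2*m) * ((2*m) * ((2*m-1).choose (m-1))) := by rw [← e1]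
    _ = (4*m) * ((2*m-1).choose (m-1) * m) := by ring
    _ = (4*m) * ((2*m-1) * ((2*m-2).choose (m-1))) := by rw [← e2]
    _ = m * (4 * (2*m-1) * ((2*m-2).choose (m-1))) := by ring


lemma cutW (w : V → V → ℝ) (X : Finset V) :
    cutWeight w X = ∑ u, ∑ v, if u ∈ X ∧ v ∉ X then w u v else 0 := by
  classical
  unfold cutWeight
  calc ∑ x ∈ X, ∑ y ∈ Xᶜ, w x y
      = ∑ x ∈ X, ∑ v, if v ∉ X then w x v else 0 := by
        refine Finset.sum_congr rfl fun x _ => ?_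
        rw [← Finset.sum_filter]
        refine Finset.sum_congr ?_ fun _ _ => rfl
        ext y; simp
    _ = ∑ u, if u ∈ X then (∑ v, if v ∉ X then w u v else 0) else 0 := by
        rw [Finset.sum_ite_mem, Finset.univ_inter]
    _ = ∑ u, ∑ v, if u ∈ X ∧ v ∉ X then w u v else 0 := by
        refine Finset.sum_congr rfl fun u _ => ?_
        by_cases hu : u ∈ X
        · simp [hu]
        · simp [hu]


lemma cut_le_mac (w : V → V → ℝ) (X : Finset V) : cutWeight w X ≤ mac w :=
  Finset.le_sup' (fun X : Finset V => cutWeight w X) (Finset.mem_univ X)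

-- main counting estimate: given a proper coloring, bound mac from below
lemma main_est (w : V → V → ℝ) (hnn : ∀ u v, 0 ≤ w u v) (ν k : ℕ)
    (hk1 : 1 ≤ k) (hkν : k ≤ ν)
    (c : V → ℕ) (hclt : ∀ v, c v < ν) (hcne : ∀ u v, 0 < w u v → c u ≠ c v)
    (count_lemma : ∀ u v : V, c u ≠ c v →
      ((Finset.powersetCard k (Finset.range ν)).filter (fun S => c u ∈ S ∧ c v ∉ S)).card
        = (ν - 2).choose (k - 1)) :
    ((ν - 2).choose (k - 1) : ℝ) * totalWeight w ≤ (ν.choose k : ℝ) * mac w := by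
  classical
  set 𝒮 := Finset.powersetCard k (Finset.range ν) with hS
  set c₁ := (ν - 2).choose (k - 1) with hc₁
  have hmain : ∑ S ∈ 𝒮, cutWeight w (Finset.univ.filter (fun v => c v ∈ S))
      = (c₁ : ℝ) * totalWeight w := by
    calc ∑ S ∈ 𝒮, cutWeight w (Finset.univ.filter (fun v => c v ∈ S))
        = ∑ S ∈ 𝒮, ∑ u, ∑ v, if c u ∈ S ∧ c v ∉ S then w u v else 0 := by
          refine Finset.sum_congr rfl fun S _ => ?_
          rw [cutW]
          refine Finset.sum_congr rfl fun u _ => Finset.sum_congr rfl fun v _ => ?_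
          congr 1
          simp [Finset.mem_filter]
      _ = ∑ u, ∑ S ∈ 𝒮, ∑ v, if c u ∈ S ∧ c v ∉ S then w u v else 0 := Finset.sum_comm
      _ = ∑ u, ∑ v, ∑ S ∈ 𝒮, if c u ∈ S ∧ c v ∉ S then w u v else 0 := by
          exact Finset.sum_congr rfl fun u _ => Finset.sum_comm
      _ = ∑ u, ∑ v, (c₁ : ℝ) * w u v := by
          refine Finset.sum_congr rfl fun u _ => Finset.sum_congr rfl fun v _ => ?_
          rw [← Finset.sum_filter, Finset.sum_const, nsmul_eq_mul]
          by_cases hw : w u v = 0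
          · rw [hw, mul_zero, mul_zero]
          · have hpos : 0 < w u v := lt_of_le_of_ne (hnn u v) (Ne.symm hw)
            rw [count_lemma u v (hcne u v hpos)]
      _ = (c₁ : ℝ) * totalWeight w := by
          unfold totalWeight
          rw [Finset.mul_sum]
          exact Finset.sum_congr rfl fun u _ => (Finset.mul_sum _ _ _).symm
  have hcard : 𝒮.card = ν.choose k := by
    rw [hS, Finset.card_powersetCard, Finset.card_range]
  calc (c₁ : ℝ) * totalWeight w
      = ∑ S ∈ 𝒮, cutWeight w (Finset.univ.filter (fun v => c v ∈ S)) := hmain.symm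
    _ ≤ 𝒮.card • mac w :=
        Finset.sum_le_card_nsmul _ _ _ (fun S _ => cut_le_mac w _)
    _ = (ν.choose k : ℝ) * mac w := by rw [hcard, nsmul_eq_mul]


lemma nat_id_even' (m : ℕ) :
    (2*m+2) * ((2*m+2).choose (m+1)) = 4 * (2*m+1) * ((2*m).choose m) := by
  have h := nat_id_even (m+1) (by omega)
  rwa [show 2*(m+1) = 2*m+2 by ring, show 2*m+2-1 = 2*m+1 by omega,
    show 2*m+2-2 = 2*m by omega, show m+1-1 = m by omega] at h

theorem longest_path_lower_bound {V : Type*} [Fintype V] [Nonempty V]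
    (w : V → V → ℝ) (hnn : ∀ u v, 0 ≤ w u v) (hdiag : ∀ v, w v v = 0) (ν : ℕ)
    (hν : IsGreatest {p : ℕ | IsPathOrder w p} ν) :
    (Odd ν → (1 / 4 + 1 / (4 * (ν : ℝ))) * totalWeight w ≤ mac w) ∧
    (Even ν → (1 / 4 + 1 / (4 * ((ν : ℝ) - 1))) * totalWeight w ≤ mac w) := by
  obtain ⟨c, hclt, hcne⟩ := exists_coloring w hdiag ν hν
  have hν1 : 1 ≤ ν := hν.2 (show IsPathOrder w 1 from
    ⟨fun _ => Classical.arbitrary V, fun a b _ => Subsingleton.elim a b,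
      fun i h => absurd h (by omega)⟩)
  have hk1 : 1 ≤ (ν + 1) / 2 := by omega
  have hkν : (ν + 1) / 2 ≤ ν := by omega
  have hcl : ∀ u v : V, c u ≠ c v →
      ((Finset.powersetCard ((ν + 1) / 2) (Finset.range ν)).filter
        (fun S => c u ∈ S ∧ c v ∉ S)).card = (ν - 2).choose ((ν + 1) / 2 - 1) :=
    fun u v hne => count_lemma hk1 (hclt u) (hclt v) hne
  have hineq := main_est w hnn ν ((ν + 1) / 2) hk1 hkν c hclt hcne hcl
  have hW : 0 ≤ totalWeight w :=
    Finset.sum_nonneg fun u _ => Finset.sum_nonneg fun v _ => hnn u v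
  constructor
  · intro hodd
    rcases Nat.lt_or_ge ν 2 with h2 | h2
    · have hν1' : ν = 1 := by omega
      subst hν1'
      norm_num at hineq ⊢
      linarith
    · obtain ⟨m, hm⟩ := hodd
      have hm1 : 1 ≤ m := by omega
      subst hm
      rw [show 2*m+1-2 = 2*m-1 by omega, show (2*m+1+1)/2 = m+1 by omega,
        show m+1-1 = m by omega] at hineq
      have hMpos : (0:ℝ) < ((2*m+1).choose (m+1) : ℝ) := by
        exact_mod_cast Nat.choose_pos (show m+1 ≤ 2*m+1 by omega)
      have hcast : (2*(m:ℝ)+2) * ((2*m+1).choose (m+1) : ℝ)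
          = 4*(2*(m:ℝ)+1) * ((2*m-1).choose m : ℝ) := by
        exact_mod_cast nat_id_odd m hm1
      have hα : (1/4 + 1/(4 * ((2*m+1 : ℕ) : ℝ))) * ((2*m+1).choose (m+1) : ℝ)
          = ((2*m-1).choose m : ℝ) := by
        have h1 : (0:ℝ) < 2*(m:ℝ)+1 := by positivity
        push_cast
        field_simp
        linarith [hcast]
      rw [← mul_le_mul_iff_left₀ hMpos]
      calc (1/4 + 1/(4 * ((2*m+1 : ℕ) : ℝ))) * totalWeight w * ((2*m+1).choose (m+1) : ℝ)
          = ((1/4 + 1/(4 * ((2*m+1 : ℕ) : ℝ))) * ((2*m+1).choose (m+1) : ℝ)) * totalWeight w := by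
            ring
        _ = ((2*m-1).choose m : ℝ) * totalWeight w := by rw [hα]
        _ ≤ ((2*m+1).choose (m+1) : ℝ) * mac w := hineq
        _ = mac w * ((2*m+1).choose (m+1) : ℝ) := by ring
  · intro heven
    obtain ⟨m, hm⟩ := heven
    have hm1 : 1 ≤ m := by omega
    obtain ⟨m', rfl⟩ : ∃ m', m = m' + 1 := ⟨m - 1, by omega⟩
    subst hm
    rw [show m'+1+(m'+1) = 2*m'+2 by omega] at hineq ⊢
    rw [show 2*m'+2-2 = 2*m' by omega, show (2*m'+2+1)/2 = m'+1 by omega,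
      show m'+1-1 = m' by omega] at hineq
    have hMpos : (0:ℝ) < ((2*m'+2).choose (m'+1) : ℝ) := by
      exact_mod_cast Nat.choose_pos (show m'+1 ≤ 2*m'+2 by omega)
    have hcast : (2*(m':ℝ)+2) * ((2*m'+2).choose (m'+1) : ℝ)
        = 4*(2*(m':ℝ)+1) * ((2*m').choose m' : ℝ) := by
      exact_mod_cast nat_id_even' m'
    have hα : (1/4 + 1/(4 * (((2*m'+2 : ℕ) : ℝ) - 1))) * ((2*m'+2).choose (m'+1) : ℝ)
        = ((2*m').choose m' : ℝ) := by
      have h1 : (0:ℝ) < 2*(m':ℝ)+1 := by positivity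
      push_cast
      have h2 : (2*(m':ℝ)+2) - 1 = 2*(m':ℝ)+1 := by ring
      rw [h2]
      field_simp
      linarith [hcast]
    rw [← mul_le_mul_iff_left₀ hMpos]
    calc (1/4 + 1/(4 * (((2*m'+2 : ℕ) : ℝ) - 1))) * totalWeight w * ((2*m'+2).choose (m'+1) : ℝ)
        = ((1/4 + 1/(4 * (((2*m'+2 : ℕ) : ℝ) - 1))) * ((2*m'+2).choose (m'+1) : ℝ)) * totalWeight w := by
          ring
      _ = ((2*m').choose m' : ℝ) * totalWeight w := by rw [hα]
      _ ≤ ((2*m'+2).choose (m'+1) : ℝ) * mac w := hineq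
      _ = mac w * ((2*m'+2).choose (m'+1) : ℝ) := by ring

end PaperStmt
end
end
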